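/- arXiv:2605.10402 — 7 statements merged into one kernel-verified Lean document; each statement's English description precedes it below -/
import Mathlib

section
/- For every natural number k > 1, the presented group ⟨x, y | x⁻¹yx = y², xᵏ = 1⟩ is finite of cardinality k·(2^k − 1). -/
/-- The relator set of the presentation `⟨x, y | x⁻¹yx = y², xᵏ = 1⟩`, with `x` the
generator indexed by `true` and `y` the generator indexed by `false`. -/
def bsRels (k : ℕ) : Set (FreeGroup Bool) :=
  { (FreeGroup.of true)⁻¹ * FreeGroup.of false * FreeGroup.of true *
      (FreeGroup.of false ^ 2)⁻¹,
    FreeGroup.of true ^ k }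

/-!
Iterating `x⁻¹ y x = y ^ 2` gives `x⁻ᵃ y xᵃ = y ^ 2 ^ a`, so `xᵏ = 1` forces `y ^ (2 ^ k - 1) = 1`.
Since `2 ^ k = 1` in `ℤ/(2 ^ k - 1)`, multiplication by `2` generates an action of `ℤ/k` on
`ℤ/(2 ^ k - 1)`, and the semidirect product `ℤ/(2 ^ k - 1) ⋊ ℤ/k` satisfies the relations with
`x ↦ (0, -1)`, `y ↦ (1, 0)`. The maps in both directions are mutually inverse on generators, so
the presented group has order `k (2 ^ k - 1)`.
-/

open Multiplicative

section ZModPowHom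

variable {M : Type*} [Group M]

def zmodPowHom (n : ℕ) (g : M) (hg : g ^ n = 1) : Multiplicative (ZMod n) →* M :=
  AddMonoidHom.toMultiplicativeLeft
    (ZMod.lift n ⟨zmultiplesHom (Additive M) (Additive.ofMul g), by
      rw [zmultiplesHom_apply, natCast_zsmul, ← ofMul_pow, hg, ofMul_one]⟩)

@[simp]
theorem zmodPowHom_ofAdd_intCast {n : ℕ} {g : M} (hg : g ^ n = 1) (a : ℤ) :
    zmodPowHom n g hg (ofAdd (a : ZMod n)) = g ^ a := by
  simp [zmodPowHom, ZMod.lift_coe]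

@[simp]
theorem zmodPowHom_ofAdd_natCast {n : ℕ} {g : M} (hg : g ^ n = 1) (a : ℕ) :
    zmodPowHom n g hg (ofAdd (a : ZMod n)) = g ^ a := by
  exact_mod_cast zmodPowHom_ofAdd_intCast hg a

@[simp]
theorem zmodPowHom_ofAdd_one {n : ℕ} {g : M} (hg : g ^ n = 1) :
    zmodPowHom n g hg (ofAdd 1) = g := by
  simpa using zmodPowHom_ofAdd_natCast hg 1

theorem MonoidHom.ext_mzmod {n : ℕ} {f g : Multiplicative (ZMod n) →* M}
    (h : f (ofAdd 1) = g (ofAdd 1)) : f = g := by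
  refine MonoidHom.ext fun z => ?_
  obtain ⟨a, ha⟩ := ZMod.intCast_surjective (toAdd z)
  have hz : z = ofAdd 1 ^ a := by rw [← ofAdd_zsmul, zsmul_one, ha, ofAdd_toAdd]
  rw [hz, map_zpow, map_zpow, h]

end ZModPowHom

section ConjEqPow

variable {G : Type*} [Group G] {x y : G} {r : ℕ}

theorem pow_inv_mul_mul_pow_of_conj_eq_pow (h : x⁻¹ * y * x = y ^ r) (a : ℕ) :
    (x ^ a)⁻¹ * y * x ^ a = y ^ r ^ a := by
  induction a with
  | zero => simp
  | succ a ih =>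
    calc (x ^ (a + 1))⁻¹ * y * x ^ (a + 1) = (x ^ a)⁻¹ * (x⁻¹ * y * x) * x ^ a := by
          rw [pow_succ]; group
      _ = ((x ^ a)⁻¹ * y * x ^ a) ^ r := by
          rw [h]; simpa using (conj_pow (a := (x ^ a)⁻¹) (b := y) (i := r)).symm
      _ = y ^ r ^ (a + 1) := by rw [ih, ← pow_mul, pow_succ]

theorem pow_pow_sub_one_eq_one_of_conj_eq_pow (h : x⁻¹ * y * x = y ^ r) {k : ℕ}
    (hx : x ^ k = 1) : y ^ (r ^ k - 1) = 1 := by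
  have hy : y ^ r ^ k = y := by
    rw [← pow_inv_mul_mul_pow_of_conj_eq_pow h, hx, inv_one, one_mul, mul_one]
  rcases eq_or_ne (r ^ k) 0 with h0 | h0
  · rw [h0, pow_zero]
  · rwa [← pow_sub_one_mul h0, mul_eq_right] at hy

end ConjEqPow

open SemidirectProduct

section MetacyclicGroup

variable {m k : ℕ} (u : (ZMod m)ˣ) (hu : u ^ k = 1)

def metacyclicAction : Multiplicative (ZMod k) →* MulAut (Multiplicative (ZMod m)) :=
  ((MulAutMultiplicative (ZMod m)).symm.toMonoidHom.comp AddAut.mulLeft).comp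
    (zmodPowHom k u hu)

theorem metacyclicAction_ofAdd_natCast (a : ℕ) (b : ZMod m) :
    metacyclicAction u hu (ofAdd a) (ofAdd b) = ofAdd ((u : ZMod m) ^ a * b) := by
  rw [metacyclicAction, MonoidHom.comp_apply, zmodPowHom_ofAdd_natCast]
  rfl

abbrev MetacyclicGroup : Type :=
  Multiplicative (ZMod m) ⋊[metacyclicAction u hu] Multiplicative (ZMod k)

namespace MetacyclicGroup

theorem card : Nat.card (MetacyclicGroup u hu) = m * k := by
  rw [SemidirectProduct.card, Nat.card_congr toAdd, Nat.card_congr toAdd, Nat.card_zmod,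
    Nat.card_zmod]

theorem inr_pow_eq_one (g : Multiplicative (ZMod k)) :
    (inr g : MetacyclicGroup u hu) ^ k = 1 := by
  rw [← map_pow, ← ofAdd_toAdd g, ← ofAdd_nsmul, nsmul_eq_mul, ZMod.natCast_self, zero_mul,
    ofAdd_zero, map_one]

variable {u} {r : ℕ}

theorem conj_eq_pow (hr : (u : ZMod m) = r) :
    (inr (ofAdd (-1)))⁻¹ * inl (ofAdd 1) * inr (ofAdd (-1)) =
      (inl (ofAdd 1) : MetacyclicGroup u hu) ^ r := by
  have := metacyclicAction_ofAdd_natCast u hu 1 1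
  rw [Nat.cast_one, pow_one, mul_one, hr] at this
  rw [← map_inv, ← ofAdd_neg, neg_neg, ofAdd_neg, ← inl_aut, this, ← map_pow, ← ofAdd_nsmul,
    nsmul_one]

variable (hr : (u : ZMod m) = r) [NeZero k] {G : Type*} [Group G] {x y : G}
  (hx : x ^ k = 1) (hy : y ^ m = 1) (hxy : x⁻¹ * y * x = y ^ r)

def lift : MetacyclicGroup u hu →* G :=
  SemidirectProduct.lift (zmodPowHom m y hy) (zmodPowHom k x⁻¹ (by rw [inv_pow, hx, inv_one]))
    fun g => by
      obtain ⟨a, ha⟩ := ZMod.natCast_zmod_surjective (toAdd g)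
      rw [← ofAdd_toAdd g, ← ha]
      refine MonoidHom.ext_mzmod ?_
      have hpow : (u : ZMod m) ^ a * 1 = ((r ^ a : ℕ) : ZMod m) := by
        rw [mul_one, hr, Nat.cast_pow]
      simp only [MonoidHom.comp_apply, MulEquiv.coe_toMonoidHom, MulAut.conj_apply,
        metacyclicAction_ofAdd_natCast, hpow, zmodPowHom_ofAdd_natCast, zmodPowHom_ofAdd_one,
        inv_pow, inv_inv, pow_inv_mul_mul_pow_of_conj_eq_pow hxy]

@[simp]
theorem lift_inl : lift hu hr hx hy hxy (inl (ofAdd 1)) = y := by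
  simp [lift]

@[simp]
theorem lift_inr : lift hu hr hx hy hxy (inr (ofAdd 1)) = x⁻¹ := by
  simp [lift]

end MetacyclicGroup

end MetacyclicGroup

theorem ZMod.natCast_pow_eq_one_mod_pow_sub_one {r : ℕ} (hr : r ≠ 0) (k : ℕ) :
    (r : ZMod (r ^ k - 1)) ^ k = 1 := by
  have h := ZMod.natCast_self (r ^ k - 1)
  rwa [Nat.cast_sub (Nat.one_le_pow _ _ (Nat.pos_of_ne_zero hr)), Nat.cast_pow, Nat.cast_one,
    sub_eq_zero] at h

section Presentation

open PresentedGroup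

variable (k : ℕ)

theorem bsRels_conj :
    (of true : PresentedGroup (bsRels k))⁻¹ * of false * of true = of false ^ 2 :=
  mk_eq_mk_of_mul_inv_mem (Set.mem_insert _ _)

theorem bsRels_x_pow : (of true : PresentedGroup (bsRels k)) ^ k = 1 :=
  one_of_mem (Set.mem_insert_of_mem _ rfl)

theorem bsRels_y_pow : (of false : PresentedGroup (bsRels k)) ^ (2 ^ k - 1) = 1 :=
  pow_pow_sub_one_eq_one_of_conj_eq_pow (bsRels_conj k) (bsRels_x_pow k)

variable [NeZero k]

def twoUnit : (ZMod (2 ^ k - 1))ˣ :=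
  Units.ofPowEqOne 2 k
    (by exact_mod_cast ZMod.natCast_pow_eq_one_mod_pow_sub_one two_ne_zero k) (NeZero.ne k)

theorem twoUnit_pow : twoUnit k ^ k = 1 :=
  Units.pow_ofPowEqOne _ _

theorem val_twoUnit : (twoUnit k : ZMod (2 ^ k - 1)) = (2 : ℕ) :=
  Nat.cast_ofNat.symm

abbrev BSModel : Type := MetacyclicGroup (twoUnit k) (twoUnit_pow k)

def toBSModel : PresentedGroup (bsRels k) →* BSModel k :=
  toGroup (f := fun b => if b then inr (ofAdd (-1)) else inl (ofAdd 1)) <| by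
    rintro r (rfl | rfl)
    · simp only [map_mul, map_inv, map_pow, FreeGroup.lift_apply_of, if_true,
        Bool.false_eq_true, if_false]
      exact mul_inv_eq_one.2 (MetacyclicGroup.conj_eq_pow _ (val_twoUnit k))
    · simp only [map_pow, FreeGroup.lift_apply_of, if_true]
      exact MetacyclicGroup.inr_pow_eq_one _ _ _

def ofBSModel : BSModel k →* PresentedGroup (bsRels k) :=
  MetacyclicGroup.lift _ (val_twoUnit k) (bsRels_x_pow k) (bsRels_y_pow k) (bsRels_conj k)

def bsRelsEquivBSModel : PresentedGroup (bsRels k) ≃* BSModel k :=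
  MonoidHom.toMulEquiv (toBSModel k) (ofBSModel k)
    (PresentedGroup.ext fun b => by cases b <;> simp [toBSModel, ofBSModel])
    (SemidirectProduct.hom_ext (MonoidHom.ext_mzmod (by simp [toBSModel, ofBSModel]))
      (MonoidHom.ext_mzmod (by simp [toBSModel, ofBSModel])))

end Presentation

/-- For `k > 1`, the presented group `⟨x, y | x⁻¹yx = y², xᵏ = 1⟩` is finite of
cardinality `k * (2 ^ k - 1)`. -/
theorem stmt_2 (k : ℕ) (hk : 1 < k) :
    Finite (PresentedGroup (bsRels k)) ∧
      Nat.card (PresentedGroup (bsRels k)) = k * (2 ^ k - 1) := by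
  have : NeZero k := ⟨by omega⟩
  have hcard : Nat.card (PresentedGroup (bsRels k)) = k * (2 ^ k - 1) := by
    rw [Nat.card_congr (bsRelsEquivBSModel k).toEquiv, MetacyclicGroup.card _ _, mul_comm]
  refine ⟨Nat.finite_of_card_ne_zero ?_, hcard⟩
  rw [hcard]
  have : 1 < 2 ^ k := Nat.one_lt_two_pow (by omega)
  exact Nat.mul_ne_zero (by omega) (by omega)
end

section
/- For every natural number k > 1, every element of the presented group ⟨x, y | x⁻¹yx = y², xᵏ = 1⟩ can be written as x^m · y^n for some natural numbers m, n with 0 ≤ m < k and 0 ≤ n < 2^k − 1, where x and y denote the images of the generators. -/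
/-!
The relation `x⁻¹yx = y²` lets every power of `y` move to the right past a power of `x`:
`yⁿ xᶜ = xᶜ y^(2ᶜ n)`. Hence the words `xᵐ yⁿ` are closed under multiplication, and since
`xᵏ = 1` forces `y = y^(2ᵏ)`, both generators have finite order, so these words also contain the
inverses of the generators and exhaust the group. Reducing `m` modulo `k` and `n` modulo
`2ᵏ - 1` gives the normal form.
-/

section NormalForm

variable {G : Type*} [Group G] {x y : G}

theorem pow_mul_pow_eq_pow_mul_pow_of_inv_mul_mul_eq_sq (h : x⁻¹ * y * x = y ^ 2) (n c : ℕ) :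
    y ^ n * x ^ c = x ^ c * y ^ (2 ^ c * n) := by
  induction c generalizing n with
  | zero => simp
  | succ c ih =>
    have hconj : y ^ n * x = x * y ^ (2 * n) := by
      have hn : x⁻¹ * y ^ n * x = y ^ (2 * n) := by
        rw [pow_mul, ← h]
        simpa using (conj_pow (a := x⁻¹) (b := y) (i := n)).symm
      rw [← hn]
      group
    calc y ^ n * x ^ (c + 1) = y ^ n * x * x ^ c := by rw [pow_succ', mul_assoc]
      _ = x * (y ^ (2 * n) * x ^ c) := by rw [hconj, mul_assoc]
      _ = x ^ (c + 1) * y ^ (2 ^ (c + 1) * n) := by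
        rw [ih, ← mul_assoc, ← pow_succ', pow_succ 2 c, mul_assoc, mul_comm 2 n]

theorem pow_two_pow_sub_one_eq_one (h : x⁻¹ * y * x = y ^ 2) {k : ℕ} (hx : x ^ k = 1) :
    y ^ (2 ^ k - 1) = 1 := by
  have hy : y = y ^ 2 ^ k := by
    simpa [hx] using pow_mul_pow_eq_pow_mul_pow_of_inv_mul_mul_eq_sq h 1 k
  rw [← pow_sub_one_mul (pow_ne_zero k two_ne_zero)] at hy
  exact mul_eq_right.mp hy.symm

theorem inv_eq_pow_pred_of_pow_eq_one {a : G} {n : ℕ} (hn : n ≠ 0) (ha : a ^ n = 1) :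
    a⁻¹ = a ^ (n - 1) :=
  (eq_inv_of_mul_eq_one_left (by rw [pow_sub_one_mul hn, ha])).symm

theorem exists_pow_mul_pow_of_mem_closure (h : x⁻¹ * y * x = y ^ 2) {k : ℕ} (hk : k ≠ 0)
    (hx : x ^ k = 1) {g : G} (hg : g ∈ Subgroup.closure {x, y}) :
    ∃ m n : ℕ, g = x ^ m * y ^ n := by
  have hy := pow_two_pow_sub_one_eq_one h hx
  have hN : 2 ^ k - 1 ≠ 0 := (Nat.sub_pos_of_lt (Nat.one_lt_two_pow hk)).ne'
  induction hg using Subgroup.closure_induction'' with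
  | mem g hg =>
    rcases hg with rfl | rfl
    exacts [⟨1, 0, by simp⟩, ⟨0, 1, by simp⟩]
  | inv_mem g hg =>
    rcases hg with rfl | rfl
    · exact ⟨k - 1, 0, by simp [inv_eq_pow_pred_of_pow_eq_one hk hx]⟩
    · exact ⟨0, 2 ^ k - 1 - 1, by simp [inv_eq_pow_pred_of_pow_eq_one hN hy]⟩
  | one => exact ⟨0, 0, by simp⟩
  | mul g g' _ _ hg hg' =>
    obtain ⟨a, b, rfl⟩ := hg
    obtain ⟨c, d, rfl⟩ := hg'
    refine ⟨a + c, 2 ^ c * b + d, ?_⟩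
    rw [mul_assoc, ← mul_assoc (y ^ b), pow_mul_pow_eq_pow_mul_pow_of_inv_mul_mul_eq_sq h]
    group

end NormalForm

/-- For `k > 1`, every element of `⟨x, y | x⁻¹yx = y², xᵏ = 1⟩` can be written as
`x ^ m * y ^ n` with `0 ≤ m < k` and `0 ≤ n < 2 ^ k - 1`. -/
theorem stmt_5 (k : ℕ) (hk : 1 < k) (g : PresentedGroup (bsRels k)) :
    ∃ m n : ℕ, m < k ∧ n < 2 ^ k - 1 ∧
      g = (PresentedGroup.of (rels := bsRels k) true) ^ m *
          (PresentedGroup.of (rels := bsRels k) false) ^ n := by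
  set x := PresentedGroup.of (rels := bsRels k) true
  set y := PresentedGroup.of (rels := bsRels k) false
  have hx : x ^ k = 1 := PresentedGroup.one_of_mem (Or.inr rfl)
  have hxy : x⁻¹ * y * x = y ^ 2 :=
    PresentedGroup.mk_eq_mk_of_mul_inv_mem (Or.inl rfl)
  have hg : g ∈ Subgroup.closure {x, y} := by
    rw [Set.pair_comm, ← Bool.range_eq, PresentedGroup.closure_range_of]
    exact Subgroup.mem_top g
  obtain ⟨m, n, rfl⟩ := exists_pow_mul_pow_of_mem_closure hxy (by omega) hx hg
  refine ⟨m % k, n % (2 ^ k - 1), Nat.mod_lt _ (by omega), Nat.mod_lt _ ?_, ?_⟩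
  · exact Nat.sub_pos_of_lt (Nat.one_lt_two_pow (by omega))
  · rw [← pow_eq_pow_mod m hx, ← pow_eq_pow_mod n (pow_two_pow_sub_one_eq_one hxy hx)]
end

section
/- Let X be a type and R a set of elements of FreeGroup X. Let X' = X ⊕ R, let ι : FreeGroup X → FreeGroup X' be the homomorphism induced by the left inclusion, and for each r ∈ R write r' = ι(r) and b_r for the generator of FreeGroup X' corresponding to r in the right summand. Let R' be the set of relators { r'⁻¹·b_r·r'·b_r⁻² : r ∈ R } ∪ { b_r⁻¹·r'·b_r·r'⁻² : r ∈ R }. Then the presented group ⟨X' | R'⟩ is isomorphic to the presented group ⟨X | R⟩. -/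
/-- The homomorphism `FreeGroup X → FreeGroup (X ⊕ R)` induced by the left inclusion. -/
def iotaHom {X : Type*} (R : Set (FreeGroup X)) :
    FreeGroup X →* FreeGroup (X ⊕ R) :=
  FreeGroup.map Sum.inl

/-- The generator `b_r` of `FreeGroup (X ⊕ R)` corresponding to `r ∈ R`. -/
def bGen {X : Type*} {R : Set (FreeGroup X)} (r : R) : FreeGroup (X ⊕ R) :=
  FreeGroup.of (Sum.inr r)

/-- The doubled relator set
`R' = { r'⁻¹·b_r·r'·b_r⁻² : r ∈ R } ∪ { b_r⁻¹·r'·b_r·r'⁻² : r ∈ R }`. -/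
def doubledRels {X : Type*} (R : Set (FreeGroup X)) : Set (FreeGroup (X ⊕ R)) :=
  (Set.range fun r : R =>
      (iotaHom R r)⁻¹ * bGen r * iotaHom R r * (bGen r ^ 2)⁻¹) ∪
  (Set.range fun r : R =>
      (bGen r)⁻¹ * iotaHom R r * bGen r * (iotaHom R r ^ 2)⁻¹)

lemma mk_rel_eq_one {α : Type*} {rels : Set (FreeGroup α)} {w : FreeGroup α} (hw : w ∈ rels) :
    PresentedGroup.mk rels w = 1 :=
  (QuotientGroup.eq_one_iff _).2 (Subgroup.subset_normalClosure hw)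

/-- Abstract group fact: if `a⁻¹ b a = b²` and `b⁻¹ a b = a²` then `a = 1` and `b = 1`. -/
lemma trivial_of_rels {G : Type*} [Group G] {A B : G}
    (h1 : A⁻¹ * B * A = B ^ 2) (h2 : B⁻¹ * A * B = A ^ 2) : A = 1 ∧ B = 1 := by
  have hBA : B * A = A * B ^ 2 := by rw [← h1]; group
  have hAB : A * B = B * A ^ 2 := by rw [← h2]; group
  have key : A * B = A * (B ^ 2 * A) := by
    rw [hAB, sq, ← mul_assoc, hBA]; group
  have hB : B = B ^ 2 * A := mul_left_cancel key
  have h3 : B * A = 1 := by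
    have : B * 1 = B * (B * A) := by rw [mul_one]; rw [sq, mul_assoc] at hB; exact hB
    exact (mul_left_cancel this).symm
  have hA : A = B⁻¹ := (inv_eq_of_mul_eq_one_right h3).symm
  rw [hA] at h2
  have hBone : B = 1 := by
    have : B⁻¹ * 1 = B⁻¹ * B⁻¹ := by
      rw [mul_one]
      calc B⁻¹ = B⁻¹ * B⁻¹ * B := by group
        _ = B⁻¹ * B⁻¹ := by rw [h2]; group
    have := (mul_left_cancel this).symm
    simpa using this.symm
  exact ⟨by rw [hA, hBone, inv_one], hBone⟩

lemma doubled_AB_one {X : Type*} (R : Set (FreeGroup X)) (r : R) :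
    PresentedGroup.mk (doubledRels R) (iotaHom R r) = 1 ∧
    PresentedGroup.mk (doubledRels R) (bGen r) = 1 := by
  set A := PresentedGroup.mk (doubledRels R) (iotaHom R r)
  set B := PresentedGroup.mk (doubledRels R) (bGen r)
  have h1 : A⁻¹ * B * A = B ^ 2 := by
    have := mk_rel_eq_one (rels := doubledRels R)
      (Or.inl ⟨r, rfl⟩ : _ ∈ doubledRels R)
    simp only [map_mul, map_inv, map_pow] at this
    have := mul_eq_one_iff_eq_inv.mp this
    simpa using this
  have h2 : B⁻¹ * A * B = A ^ 2 := by
    have := mk_rel_eq_one (rels := doubledRels R)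
      (Or.inr ⟨r, rfl⟩ : _ ∈ doubledRels R)
    simp only [map_mul, map_inv, map_pow] at this
    have := mul_eq_one_iff_eq_inv.mp this
    simpa using this
  exact trivial_of_rels h1 h2

/-- The presented group `⟨X ⊕ R | R'⟩` on the doubled relator set is isomorphic to
the original presented group `⟨X | R⟩`. -/
theorem stmt_6 {X : Type*} (R : Set (FreeGroup X)) :
    Nonempty (PresentedGroup (doubledRels R) ≃* PresentedGroup R) := by
  classical
  -- forward map
  set f : X ⊕ R → PresentedGroup R :=
    Sum.elim (fun x => PresentedGroup.of x) (fun _ => 1) with hf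
  have hlift_iota : ∀ w : FreeGroup X,
      FreeGroup.lift f (iotaHom R w) = PresentedGroup.mk R w := by
    intro w
    have : (FreeGroup.lift f).comp (iotaHom R) = PresentedGroup.mk R := by
      apply FreeGroup.ext_hom
      intro x
      simp [iotaHom, hf, PresentedGroup.of, f]
    exact DFunLike.congr_fun this w
  have hfrels : ∀ w ∈ doubledRels R, FreeGroup.lift f w = 1 := by
    rintro w (⟨r, rfl⟩ | ⟨r, rfl⟩) <;>
      · simp only [map_mul, map_inv, map_pow, hlift_iota]
        have hb : FreeGroup.lift f (bGen r) = 1 := by simp [bGen, f]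
        have hr : PresentedGroup.mk R (r : FreeGroup X) = 1 := mk_rel_eq_one r.2
        rw [hb, hr]; group
  set φ : PresentedGroup (doubledRels R) →* PresentedGroup R :=
    PresentedGroup.toGroup hfrels with hφ
  -- backward map
  set g : X → PresentedGroup (doubledRels R) :=
    fun x => PresentedGroup.of (Sum.inl x) with hg
  have hlift_g : ∀ w : FreeGroup X,
      FreeGroup.lift g w = PresentedGroup.mk (doubledRels R) (iotaHom R w) := by
    intro w
    have : FreeGroup.lift g
        = (PresentedGroup.mk (doubledRels R)).comp (iotaHom R) := by
      apply FreeGroup.ext_hom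
      intro x
      simp [iotaHom, hg, PresentedGroup.of]
    rw [this]; rfl
  have hgrels : ∀ w ∈ R, FreeGroup.lift g w = 1 := by
    intro w hw
    rw [hlift_g]
    exact (doubled_AB_one R ⟨w, hw⟩).1
  set ψ : PresentedGroup R →* PresentedGroup (doubledRels R) :=
    PresentedGroup.toGroup hgrels with hψ
  refine ⟨MonoidHom.toMulEquiv φ ψ ?_ ?_⟩
  · apply PresentedGroup.ext
    rintro (x | r)
    · simp [hφ, hψ, f, g, PresentedGroup.toGroup.of]
    · have hb : φ (PresentedGroup.of (Sum.inr r)) = 1 := by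
        simp [hφ, f, PresentedGroup.toGroup.of]
      simp only [MonoidHom.comp_apply, hb, map_one, MonoidHom.id_apply]
      exact ((doubled_AB_one R r).2).symm
  · apply PresentedGroup.ext
    intro x
    simp [hφ, hψ, f, g, PresentedGroup.toGroup.of]
end

section
/- Let X be a type and R a set of elements of FreeGroup X. Let X' = X ⊕ R, let ι : FreeGroup X → FreeGroup X' be the homomorphism induced by the left inclusion, and for each r ∈ R write r' = ι(r) and b_r for the generator of FreeGroup X' corresponding to r in the right summand. Let R' = { r'⁻¹·b_r·r'·b_r⁻² : r ∈ R } ∪ { b_r⁻¹·r'·b_r·r'⁻² : r ∈ R }. Fix r₀ ∈ R and let R'' = R' \ { r₀'⁻¹·b_{r₀}·r₀'·b_{r₀}⁻² }. Then there is a surjective group homomorphism from the presented group ⟨X' | R''⟩ onto ℤ, sending every generator from X to 0, sending b_r to 0 for every r ≠ r₀, and sending b_{r₀} to 1. In particular ⟨X' | R''⟩ is infinite. -/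
/-!
Send every generator to `0` except `b_{r₀}`, which goes to `1`. Every `r'` then maps to `0`, so
the relator `b_r⁻¹·r'·b_r·r'⁻²` maps to `0` for every `r`, and `r'⁻¹·b_r·r'·b_r⁻²` maps to the
negative of the image of `b_r`, which vanishes for `r ≠ r₀`. The only relator that would kill
`b_{r₀}` has been removed.
-/

theorem MonoidHom.surjective_of_map_eq_ofAdd_one {H : Type*} [Group H]
    (f : H →* Multiplicative ℤ) {a : H} (ha : f a = Multiplicative.ofAdd 1) :
    Function.Surjective f := fun n =>
  ⟨a ^ n.toAdd, by rw [map_zpow, ha, ← Int.ofAdd_mul, one_mul, ofAdd_toAdd]⟩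

namespace DoubledPresentation

variable {X : Type*} {R : Set (FreeGroup X)} {G : Type*} [Group G]

theorem lift_iotaHom_eq_one {φ : X ⊕ R → G} (hX : ∀ x, φ (Sum.inl x) = 1) (w : FreeGroup X) :
    FreeGroup.lift φ (iotaHom R w) = 1 := by
  induction w using FreeGroup.induction_on with
  | C1 => simp
  | of x => simp [iotaHom, hX]
  | inv_of x hx => simpa using hx
  | mul u v hu hv => simp [hu, hv]

theorem lift_eq_one_of_mem_doubledRels_diff {φ : X ⊕ R → G} {r₀ : R}
    (hX : ∀ x, φ (Sum.inl x) = 1) (hR : ∀ r, r ≠ r₀ → φ (Sum.inr r) = 1) :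
    ∀ w ∈ doubledRels R \ {(iotaHom R r₀)⁻¹ * bGen r₀ * iotaHom R r₀ * (bGen r₀ ^ 2)⁻¹},
      FreeGroup.lift φ w = 1 := by
  rintro w ⟨⟨r, rfl⟩ | ⟨r, rfl⟩, hne⟩
  · have hr : r ≠ r₀ := by rintro rfl; exact hne rfl
    simp [lift_iotaHom_eq_one hX, bGen, hR r hr]
  · simp [lift_iotaHom_eq_one hX]

end DoubledPresentation

open DoubledPresentation in
/-- Removing the relator `r₀'⁻¹·b_{r₀}·r₀'·b_{r₀}⁻²` from the doubled relator set yields a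
group admitting a surjection onto `ℤ` sending all generators from `X` to `0`, `b_r` to `0`
for `r ≠ r₀`, and `b_{r₀}` to `1`; in particular it is infinite. -/
theorem stmt_7 {X : Type*} (R : Set (FreeGroup X)) (r₀ : R) :
    (∃ f : PresentedGroup
        (doubledRels R \
          {(iotaHom R r₀)⁻¹ * bGen r₀ * iotaHom R r₀ * (bGen r₀ ^ 2)⁻¹}) →*
        Multiplicative ℤ,
      Function.Surjective f ∧
      (∀ x : X, f (PresentedGroup.of (Sum.inl x)) = Multiplicative.ofAdd 0) ∧
      (∀ r : R, r ≠ r₀ →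
        f (PresentedGroup.of (Sum.inr r)) = Multiplicative.ofAdd 0) ∧
      f (PresentedGroup.of (Sum.inr r₀)) = Multiplicative.ofAdd 1) ∧
    Infinite (PresentedGroup
      (doubledRels R \
        {(iotaHom R r₀)⁻¹ * bGen r₀ * iotaHom R r₀ * (bGen r₀ ^ 2)⁻¹})) := by
  classical
  let φ : X ⊕ R → Multiplicative ℤ := Sum.elim 1 (Pi.mulSingle r₀ (Multiplicative.ofAdd 1))
  have hrels := lift_eq_one_of_mem_doubledRels_diff (φ := φ) (r₀ := r₀) (fun _ => rfl)
    (fun r hr => Pi.mulSingle_eq_of_ne hr _)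
  let f := PresentedGroup.toGroup hrels
  have hb : f (PresentedGroup.of (Sum.inr r₀)) = Multiplicative.ofAdd 1 := by
    simp [f, φ, PresentedGroup.toGroup.of]
  have hsurj : Function.Surjective f := f.surjective_of_map_eq_ofAdd_one hb
  refine ⟨⟨f, hsurj, fun x => ?_, fun r hr => ?_, hb⟩, Infinite.of_surjective f hsurj⟩
  · simp [f, φ, PresentedGroup.toGroup.of]
  · simp [f, φ, PresentedGroup.toGroup.of, hr]
end

section
/- Let A, B, C be groups and let φ : C → A and ψ : C → B be injective group homomorphisms whose images are proper subgroups (φ(C) ≠ A and ψ(C) ≠ B). Then the amalgamated free product A *_C B (the pushout of the diagram A ← C → B in the category of groups) is an infinite group. -/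
/-!
Pick `a ∈ A` outside `φ(C)` and `b ∈ B` outside `ψ(C)`. For every `n ≥ 1` the alternating word
`abab⋯ab` of length `2n` is reduced, so by the normal form theorem for amalgamated products its
value `(ab)ⁿ` does not even lie in the image of `C`; in particular `ab` has infinite order.
-/

universe u

/-- The two-group family indexed by `Bool`: `A` at `true` and `B` at `false`. -/
def twoFam (A B : Type u) : Bool → Type u := fun i => Bool.rec B A i

instance twoFamGroup (A B : Type u) [Group A] [Group B] : ∀ i, Group (twoFam A B i)
  | true => ‹Group A›
  | false => ‹Group B›

/-- The pair of homomorphisms `φ : C →* A`, `ψ : C →* B` as a family indexed by `Bool`. -/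
def twoHoms {A B : Type u} {C : Type*} [Group A] [Group B] [Group C]
    (φ : C →* A) (ψ : C →* B) : ∀ i, C →* twoFam A B i
  | true => φ
  | false => ψ

namespace Monoid

namespace CoprodI.NeWord

variable {ι : Type*} {M : ι → Type*} [∀ i, Monoid (M i)] {i j : ι}

/-- `w.pow hji n` is the word `w w ⋯ w` with `n + 1` copies of `w`. -/
def pow (w : NeWord M i j) (hji : j ≠ i) : ℕ → NeWord M i j
  | 0 => w
  | n + 1 => append w hji (w.pow hji n)

theorem prod_pow (w : NeWord M i j) (hji : j ≠ i) (n : ℕ) :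
    (w.pow hji n).prod = w.prod ^ (n + 1) := by
  induction n with
  | zero => simp [pow]
  | succ n ih => rw [pow, append_prod, ih, pow_succ' _ (n + 1)]

theorem mem_toList_pow {w : NeWord M i j} {hji : j ≠ i} {n : ℕ} {x : Σ i, M i}
    (hx : x ∈ (w.pow hji n).toList) : x ∈ w.toList := by
  induction n with
  | zero => exact hx
  | succ n ih =>
    rcases List.mem_append.1 hx with hx | hx
    exacts [hx, ih hx]

end CoprodI.NeWord

namespace PushoutI

open CoprodI

variable {ι : Type*} {G : ι → Type*} {H : Type*} [∀ i, Group (G i)] [Group H]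
  {φ : ∀ i, H →* G i}

theorem not_isOfFinOrder_ofCoprodI_prod (hφ : ∀ i, Function.Injective (φ i)) {i j : ι}
    (w : NeWord G i j) (hji : j ≠ i) (hw : Reduced φ w.toWord) :
    ¬IsOfFinOrder (ofCoprodI (φ := φ) w.prod) := by
  intro hfin
  obtain ⟨n, hn, hpow⟩ := hfin.exists_pow_eq_one
  obtain ⟨m, rfl⟩ := Nat.exists_eq_add_one_of_ne_zero hn.ne'
  have hpow_reduced : Reduced φ (w.pow hji m).toWord := fun x hx =>
    hw x (NeWord.mem_toList_pow hx)
  have hmem : ofCoprodI (w.pow hji m).toWord.prod ∈ (base φ).range := by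
    rw [← NeWord.prod, NeWord.prod_pow, map_pow, hpow]
    exact one_mem _
  have hempty := congrArg Word.toList (hpow_reduced.eq_empty_of_mem_range hφ hmem)
  exact (w.pow hji m).toList_ne_nil hempty

theorem not_isOfFinOrder_of_mul_of (hφ : ∀ i, Function.Injective (φ i)) {i j : ι}
    (hij : i ≠ j) {a : G i} {b : G j} (ha : a ∉ (φ i).range) (hb : b ∉ (φ j).range) :
    ¬IsOfFinOrder (of (φ := φ) i a * of j b) := by
  have ha1 : a ≠ 1 := fun h => ha (h ▸ one_mem _)
  have hb1 : b ≠ 1 := fun h => hb (h ▸ one_mem _)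
  let w : NeWord G i j := .append (.singleton a ha1) hij (.singleton b hb1)
  have hw : Reduced φ w.toWord := by
    simp only [Reduced, w, NeWord.toWord, NeWord.toList, List.singleton_append, List.mem_cons,
      List.not_mem_nil, or_false, forall_eq_or_imp, forall_eq]
    exact ⟨ha, hb⟩
  simpa [w, NeWord.append_prod, NeWord.prod_singleton, ofCoprodI_of] using
    not_isOfFinOrder_ofCoprodI_prod hφ w hij.symm hw

theorem infinite_of_range_ne_top (hφ : ∀ i, Function.Injective (φ i)) {i j : ι}
    (hij : i ≠ j) (hi : (φ i).range ≠ ⊤) (hj : (φ j).range ≠ ⊤) : Infinite (PushoutI φ) := by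
  obtain ⟨a, ha⟩ := SetLike.exists_not_mem_of_ne_top _ hi
  obtain ⟨b, hb⟩ := SetLike.exists_not_mem_of_ne_top _ hj
  exact Infinite.of_injective _
    (injective_pow_iff_not_isOfFinOrder.2 (not_isOfFinOrder_of_mul_of hφ hij ha hb))

end PushoutI

end Monoid

/-- If `φ : C →* A` and `ψ : C →* B` are injective with proper images, then the
amalgamated free product `A *_C B` (the pushout of `A ← C → B`) is infinite. -/
theorem stmt_9 {A B : Type u} {C : Type*} [Group A] [Group B] [Group C]
    (φ : C →* A) (ψ : C →* B)
    (hφ : Function.Injective φ) (hψ : Function.Injective ψ)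
    (hA : φ.range ≠ ⊤) (hB : ψ.range ≠ ⊤) :
    Infinite (Monoid.PushoutI (twoHoms φ ψ)) :=
  Monoid.PushoutI.infinite_of_range_ne_top (i := true) (j := false)
    (fun | true => hφ | false => hψ) Bool.noConfusion hA hB
end

section
/- The presented group ⟨σ, τ | τ² = 1, τ⁻¹στ = σ³⟩, on two generators σ, τ with relator set {τ², τ⁻¹·σ·τ·σ⁻³}, is isomorphic to the semidirect product (ℤ/8) ⋊ (ℤ/2), where the action is given by a homomorphism φ : ℤ/2 → Aut(ℤ/8) sending the generator 1 of ℤ/2 to the automorphism of ℤ/8 given by multiplication by 3. In particular this group is finite of cardinality 16. -/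
/-!
Write `σ = of true`, `τ = of false`. Conjugating `m` times by `τ` turns `τ⁻¹στ = σ^k` into
`σ = σ^(k^m)`, so when `k^m = n + 1` the order of `σ` divides `n`. In `ℤ/n ⋊ ℤ/m`, where the
generator of `ℤ/m` acts by multiplication by `k` (well defined as `k^m ≡ 1 mod n`), the elements
`(1, 0)` and `(0, -1)` satisfy the defining relations; conversely `σ` and `τ⁻¹` satisfy those of
the semidirect product. The two resulting homomorphisms agree with the identity on generators.
For the theorem, `m = 2`, `k = 3`, `n = 8`.
-/

namespace ZMod

theorem closure_ofAdd_one (n : ℕ) :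
    Subgroup.closure {Multiplicative.ofAdd (1 : ZMod n)} = ⊤ := by
  refine eq_top_iff.2 fun x _ => ?_
  obtain ⟨j, hj⟩ := ZMod.intCast_surjective (Multiplicative.toAdd x)
  rw [← Subgroup.zpowers_eq_closure]
  exact ⟨j, by simp only [← ofAdd_zsmul, zsmul_one, hj]; rfl⟩

def unitsMulAut (n : ℕ) : (ZMod n)ˣ →* MulAut (Multiplicative (ZMod n)) :=
  (MulAutMultiplicative (ZMod n)).symm.toMonoidHom.comp (DistribMulAction.toAddAut _ _)

@[simp]
theorem unitsMulAut_apply {n : ℕ} (u : (ZMod n)ˣ) (a : ZMod n) :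
    unitsMulAut n u (Multiplicative.ofAdd a) = Multiplicative.ofAdd (u * a) := rfl

variable {n : ℕ} {G : Type*} [Group G]

def liftOfPowEqOne (g : G) (hg : g ^ n = 1) : Multiplicative (ZMod n) →* G :=
  AddMonoidHom.toMultiplicativeLeft <| ZMod.lift n ⟨zmultiplesHom _ (Additive.ofMul g), by
    rw [zmultiplesHom_apply, natCast_zsmul, ← ofMul_pow, hg, ofMul_one]⟩

@[simp]
theorem liftOfPowEqOne_ofAdd_natCast (g : G) (hg : g ^ n = 1) (j : ℕ) :
    liftOfPowEqOne g hg (Multiplicative.ofAdd (j : ZMod n)) = g ^ j := by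
  rw [← Int.cast_natCast]
  show Additive.toMul (ZMod.lift n _ ((j : ℤ) : ZMod n)) = g ^ j
  rw [ZMod.lift_coe, zmultiplesHom_apply, natCast_zsmul, toMul_nsmul, toMul_ofMul]

@[simp]
theorem liftOfPowEqOne_ofAdd_one (g : G) (hg : g ^ n = 1) :
    liftOfPowEqOne g hg (Multiplicative.ofAdd 1) = g := by
  simpa using liftOfPowEqOne_ofAdd_natCast g hg 1

theorem monoidHom_ext {f f' : Multiplicative (ZMod n) →* G}
    (h : f (Multiplicative.ofAdd 1) = f' (Multiplicative.ofAdd 1)) : f = f' :=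
  MonoidHom.eq_of_eqOn_dense (closure_ofAdd_one n) (by simpa using h)

end ZMod

theorem conj_pow_eq_pow_pow {G : Type*} [Group G] {σ τ : G} {k : ℕ}
    (h : τ⁻¹ * σ * τ = σ ^ k) (j : ℕ) : (τ ^ j)⁻¹ * σ * τ ^ j = σ ^ k ^ j := by
  induction j with
  | zero => simp
  | succ j ih =>
    calc (τ ^ (j + 1))⁻¹ * σ * τ ^ (j + 1) = τ⁻¹ * ((τ ^ j)⁻¹ * σ * τ ^ j) * τ := by group
      _ = (τ⁻¹ * σ * τ) ^ k ^ j := by simpa [ih] using map_pow (MulAut.conj τ⁻¹) σ (k ^ j)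
      _ = σ ^ k ^ (j + 1) := by rw [h, ← pow_mul, pow_succ']

theorem pow_eq_one_of_inv_mul_mul_eq_pow {G : Type*} [Group G] {σ τ : G} {m n k : ℕ}
    (hτ : τ ^ m = 1) (h : τ⁻¹ * σ * τ = σ ^ k) (hk : k ^ m = n + 1) : σ ^ n = 1 := by
  have hσ := conj_pow_eq_pow_pow h m
  rwa [hτ, inv_one, one_mul, mul_one, hk, pow_succ, right_eq_mul] at hσ

theorem SemidirectProduct.lift_condition_of_closure_eq_top {N G H : Type*} [Group N] [Group G]
    [Group H] {φ : G →* MulAut N} (fn : N →* H) (fg : G →* H) {s : Set G} {t : Set N}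
    (hs : Subgroup.closure s = ⊤) (ht : Subgroup.closure t = ⊤)
    (h : ∀ g ∈ s, ∀ x ∈ t, fn (φ g x) = fg g * fn x * (fg g)⁻¹) (g : G) :
    fn.comp (φ g).toMonoidHom = (MulAut.conj (fg g)).toMonoidHom.comp fn := by
  have hg : g ∈ Subgroup.closure s := hs ▸ Subgroup.mem_top g
  induction hg using Subgroup.closure_induction with
  | mem g hg => exact MonoidHom.eq_of_eqOn_dense ht (h g hg)
  | one => ext; simp
  | mul g g' _ _ hg hg' =>
    ext x
    have hgx : fn (φ g (φ g' x)) = fg g * fn (φ g' x) * (fg g)⁻¹ :=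
      DFunLike.congr_fun hg (φ g' x)
    have hg'x : fn (φ g' x) = fg g' * fn x * (fg g')⁻¹ := DFunLike.congr_fun hg' x
    simp only [MonoidHom.comp_apply, MulEquiv.coe_toMonoidHom, MulAut.conj_apply, map_mul,
      MulAut.mul_apply, hgx, hg'x]
    group
  | inv g _ hg =>
    ext x
    have hgx : fn x = fg g * fn ((φ g)⁻¹ x) * (fg g)⁻¹ := by
      simpa using DFunLike.congr_fun hg ((φ g)⁻¹ x)
    simp only [MonoidHom.comp_apply, MulEquiv.coe_toMonoidHom, map_inv, MulAut.conj_inv_apply]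
    rw [hgx]
    group

def conjPowRels (m k : ℕ) : Set (FreeGroup Bool) :=
  {FreeGroup.of false ^ m,
    (FreeGroup.of false)⁻¹ * FreeGroup.of true * FreeGroup.of false * (FreeGroup.of true ^ k)⁻¹}

section ConjPowPresentation

open Multiplicative SemidirectProduct

variable {m n k : ℕ}

local notation "P" => PresentedGroup (conjPowRels m k)

theorem conjPowRels_of_false_pow : (PresentedGroup.of false : P) ^ m = 1 := by
  simpa [PresentedGroup.of] using PresentedGroup.one_of_mem (rels := conjPowRels m k) (.inl rfl)

theorem conjPowRels_inv_mul_mul :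
    (PresentedGroup.of false : P)⁻¹ * .of true * .of false = .of true ^ k := by
  simpa [PresentedGroup.of, mul_inv_eq_one] using
    PresentedGroup.one_of_mem (rels := conjPowRels m k) (.inr rfl)

theorem natCast_pow_eq_one (hk : k ^ m = n + 1) : (k : ZMod n) ^ m = 1 := by
  rw [← Nat.cast_pow, hk, Nat.cast_succ, ZMod.natCast_self, zero_add]

variable [NeZero m]

def mulPowAction (hk : (k : ZMod n) ^ m = 1) :
    Multiplicative (ZMod m) →* MulAut (Multiplicative (ZMod n)) :=
  ZMod.liftOfPowEqOne (ZMod.unitsMulAut n (Units.ofPowEqOne _ m hk (NeZero.ne m)))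
    (by rw [← map_pow, Units.pow_ofPowEqOne, map_one])

@[simp]
theorem mulPowAction_ofAdd_one (hk : (k : ZMod n) ^ m = 1) (a : ZMod n) :
    mulPowAction hk (ofAdd 1) (ofAdd a) = ofAdd (k * a) := by
  simp [mulPowAction]

def semidirectProductToPresented (hk : k ^ m = n + 1) :
    Multiplicative (ZMod n) ⋊[mulPowAction (natCast_pow_eq_one hk)] Multiplicative (ZMod m) →*
      P :=
  lift (ZMod.liftOfPowEqOne (.of true)
      (pow_eq_one_of_inv_mul_mul_eq_pow conjPowRels_of_false_pow conjPowRels_inv_mul_mul hk))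
    (ZMod.liftOfPowEqOne (.of false)⁻¹ (by rw [inv_pow, conjPowRels_of_false_pow, inv_one]))
    (lift_condition_of_closure_eq_top _ _ (ZMod.closure_ofAdd_one m) (ZMod.closure_ofAdd_one n)
      (by rintro _ rfl _ rfl; simpa using conjPowRels_inv_mul_mul.symm))

-- `τ` goes to the inverse of the generator of `ℤ/m`, since it is `τ⁻¹` that acts by `k`.
def presentedToSemidirectProduct (hk : k ^ m = n + 1) :
    P →* Multiplicative (ZMod n) ⋊[mulPowAction (natCast_pow_eq_one hk)] Multiplicative (ZMod m) :=
  PresentedGroup.toGroup (f := fun b => if b then inl (ofAdd 1) else inr (ofAdd 1)⁻¹) <| by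
    simp only [conjPowRels, Set.mem_insert_iff, Set.mem_singleton_iff, forall_eq_or_imp,
      forall_eq, map_mul, map_inv, map_pow, FreeGroup.lift_apply_of, if_true, Bool.false_eq_true,
      if_false, inv_inv]
    constructor
    · rw [inv_pow, ← map_pow, ← ofAdd_nsmul, nsmul_one, ZMod.natCast_self, ofAdd_zero, map_one,
        inv_one]
    · rw [← map_inv inr, ← inl_aut, mul_inv_eq_one, ← map_pow, mulPowAction_ofAdd_one,
        ← ofAdd_nsmul, nsmul_one, mul_one]

def presentedMulEquivSemidirectProduct (hk : k ^ m = n + 1) :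
    P ≃* Multiplicative (ZMod n) ⋊[mulPowAction (natCast_pow_eq_one hk)] Multiplicative (ZMod m) :=
  MonoidHom.toMulEquiv (presentedToSemidirectProduct hk) (semidirectProductToPresented hk)
    (PresentedGroup.ext fun b => by
      cases b <;> simp [presentedToSemidirectProduct, semidirectProductToPresented])
    (hom_ext
      (ZMod.monoidHom_ext <| by simp [presentedToSemidirectProduct, semidirectProductToPresented])
      (ZMod.monoidHom_ext <| by simp [presentedToSemidirectProduct, semidirectProductToPresented]))

theorem card_presentedGroup_conjPowRels (hk : k ^ m = n + 1) : Nat.card P = n * m := by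
  rw [Nat.card_congr (presentedMulEquivSemidirectProduct hk).toEquiv, SemidirectProduct.card,
    Nat.card_congr Multiplicative.toAdd, Nat.card_congr Multiplicative.toAdd, Nat.card_zmod,
    Nat.card_zmod]

end ConjPowPresentation

/-- The presented group `⟨σ, τ | τ² = 1, τ⁻¹στ = σ³⟩` is isomorphic to the semidirect
product `(ℤ/8) ⋊ (ℤ/2)` where the generator `1` of `ℤ/2` acts by multiplication by `3`;
in particular it is finite of cardinality 16. Here `σ` is the generator indexed by
`true` and `τ` the generator indexed by `false`. -/
theorem stmt_11 :
    ∃ φ : Multiplicative (ZMod 2) →* MulAut (Multiplicative (ZMod 8)),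
      (∀ a : ZMod 8,
        φ (Multiplicative.ofAdd (1 : ZMod 2)) (Multiplicative.ofAdd a) =
          Multiplicative.ofAdd (3 * a)) ∧
      Nonempty (PresentedGroup
        ({FreeGroup.of false ^ 2,
          (FreeGroup.of false)⁻¹ * FreeGroup.of true * FreeGroup.of false *
            (FreeGroup.of true ^ 3)⁻¹} : Set (FreeGroup Bool)) ≃*
        SemidirectProduct (Multiplicative (ZMod 8)) (Multiplicative (ZMod 2)) φ) ∧
      Finite (PresentedGroup
        ({FreeGroup.of false ^ 2,
          (FreeGroup.of false)⁻¹ * FreeGroup.of true * FreeGroup.of false *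
            (FreeGroup.of true ^ 3)⁻¹} : Set (FreeGroup Bool))) ∧
      Nat.card (PresentedGroup
        ({FreeGroup.of false ^ 2,
          (FreeGroup.of false)⁻¹ * FreeGroup.of true * FreeGroup.of false *
            (FreeGroup.of true ^ 3)⁻¹} : Set (FreeGroup Bool))) = 16 := by
  have hk : 3 ^ 2 = 8 + 1 := rfl
  have hcard := card_presentedGroup_conjPowRels hk
  exact ⟨mulPowAction (natCast_pow_eq_one hk), fun a => by simp,
    ⟨presentedMulEquivSemidirectProduct hk⟩,
    Nat.finite_of_card_ne_zero (hcard.trans_ne (by norm_num)), hcard⟩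
end

section
/- Let G be a finite non-cyclic group, let X be a finite type, and let R be a finite set of elements of FreeGroup X such that G is isomorphic to the presented group ⟨X | R⟩ and the presentation is irredundant, i.e. for every r ∈ R the presented group ⟨X | R \ {r}⟩ is not isomorphic to G. Let X' = X ⊕ R, let ι : FreeGroup X → FreeGroup X' be induced by the left inclusion, for r ∈ R write r' = ι(r) and b_r for the generator corresponding to r in the right summand, and let R' = { r'⁻¹·b_r·r'·b_r⁻² : r ∈ R } ∪ { b_r⁻¹·r'·b_r·r'⁻² : r ∈ R }. Then ⟨X' | R'⟩ is a just finite presentation of G: the presented group ⟨X' | R'⟩ is isomorphic to G, and for every s ∈ R' the presented group ⟨X' | R' \ {s}⟩ is infinite. -/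
theorem eq_one_of_conj_eq_sq {G : Type*} [Group G] {a b : G}
    (hab : a⁻¹ * b * a = b ^ 2) (hba : b⁻¹ * a * b = a ^ 2) : a = 1 ∧ b = 1 := by
  have h₁ : b * a = a * b * b := by rw [mul_assoc, ← sq, ← hab]; group
  have h₂ : a * b = b * a * a := by rw [mul_assoc, ← sq, ← hba]; group
  have hb : b = a⁻¹ := by
    have : b * a = b * a * (a * b) := by
      calc b * a = a * b * b := h₁
        _ = b * a * a * b := by rw [h₂]
        _ = b * a * (a * b) := by group
    exact eq_inv_of_mul_eq_one_right (mul_eq_left.mp this.symm)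
  subst hb
  have ha : a = 1 := by simpa [sq] using hab
  exact ⟨ha, by simp [ha]⟩

open Subgroup Monoid

universe u

section ZPowersLift
variable {G M : Type*} [Group G] [Group M] {x : G} {y : M}

def zpowersHomRestrict (x : G) : Multiplicative ℤ →* zpowers x :=
  (zpowersHom G x).codRestrict _ fun k => zpow_mem_zpowers x k.toAdd

theorem zpowersHomRestrict_surjective (x : G) : Function.Surjective (zpowersHomRestrict x) :=
  fun ⟨_, k, hk⟩ => ⟨.ofAdd k, Subtype.ext hk⟩

theorem ker_zpowersHomRestrict_le (hy : y ^ orderOf x = 1) :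
    (zpowersHomRestrict x).ker ≤ (zpowersHom M y).ker := by
  intro k hk
  have hxk : x ^ k.toAdd = 1 := congrArg Subtype.val hk
  change y ^ k.toAdd = 1
  rw [← orderOf_dvd_iff_zpow_eq_one] at hxk ⊢
  exact (Int.natCast_dvd_natCast.mpr (orderOf_dvd_of_pow_eq_one hy)).trans hxk

noncomputable def zpowersLift (hy : y ^ orderOf x = 1) : zpowers x →* M :=
  MonoidHom.liftOfSurjective _ (zpowersHomRestrict_surjective x)
    ⟨zpowersHom M y, ker_zpowersHomRestrict_le hy⟩

theorem zpowersLift_apply_self (hy : y ^ orderOf x = 1) :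
    zpowersLift hy ⟨x, mem_zpowers x⟩ = y := by
  have hx : zpowersHomRestrict x (.ofAdd 1) = ⟨x, mem_zpowers x⟩ := Subtype.ext (zpow_one x)
  rw [← hx]
  exact (MonoidHom.liftOfRightInverse_comp_apply _ _ _ _ _).trans (zpow_one y)

end ZPowersLift

theorem Subgroup.infinite_of_mem_of_not_isOfFinOrder {G : Type*} [Group G] {K : Subgroup G}
    {x : G} (hx : x ∈ K) (h : ¬IsOfFinOrder x) : Infinite K :=
  Set.infinite_coe_iff.mpr ((infinite_zpowers.mpr h).mono (zpowers_le.mpr hx))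

namespace Monoid.CoprodI
variable {ι : Type*} {G : ι → Type*} [∀ i, Group (G i)]

theorem not_isOfFinOrder_of_mul_of {i j : ι} (hij : i ≠ j) {a : G i} {b : G j}
    (ha : a ≠ 1) (hb : b ≠ 1) : ¬IsOfFinOrder (of a * of b) := by
  classical
  set w₁ : NeWord G i j := .append (.singleton a ha) hij (.singleton b hb)
  have hw₁ : w₁.prod = of a * of b := by simp [w₁, NeWord.append_prod]
  have hpow : ∀ k : ℕ, ∃ w : NeWord G i j, w.prod = (of a * of b) ^ (k + 1) := by
    intro k
    induction k with
    | zero => exact ⟨w₁, by rw [hw₁, zero_add, pow_one]⟩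
    | succ k ih =>
      obtain ⟨w, hw⟩ := ih
      exact ⟨.append w hij.symm w₁, by rw [NeWord.append_prod, hw, hw₁, ← pow_succ]⟩
  rw [isOfFinOrder_iff_pow_eq_one]
  rintro ⟨n, hn, hx⟩
  obtain ⟨w, hw⟩ := hpow (n - 1)
  rw [Nat.sub_add_cancel hn, hx, ← Word.prod_empty] at hw
  have hempty : w.toWord = Word.empty := Word.equiv.symm.injective hw
  exact w.toList_ne_nil (congrArg Word.toList hempty)

end Monoid.CoprodI

noncomputable section InducedCoprod
variable {Q : Type*} [Group Q] (H : Subgroup Q) {A : Type*} [Group A] (χ : H →* MulAut A)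

theorem smul_coe_one_eq_iff (q : Q) : q • ((1 : Q) : Q ⧸ H) = ((1 : Q) : Q ⧸ H) ↔ q ∈ H := by
  rw [MulAction.Quotient.smul_mk, smul_eq_mul, mul_one, QuotientGroup.eq, mul_one, inv_mem_iff]

theorem out_inv_mul_mul_out_mem (q : Q) (i : Q ⧸ H) : (q • i).out⁻¹ * q * i.out ∈ H := by
  rw [mul_assoc, ← QuotientGroup.eq, QuotientGroup.out_eq', ← smul_eq_mul,
    ← MulAction.Quotient.smul_mk, QuotientGroup.out_eq']

def cosetCocycle (q : Q) (i : Q ⧸ H) : H := ⟨_, out_inv_mul_mul_out_mem H q i⟩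

theorem cosetCocycle_mul (q q' : Q) (i : Q ⧸ H) :
    cosetCocycle H (q * q') i = cosetCocycle H q (q' • i) * cosetCocycle H q' i := by
  ext
  simp only [cosetCocycle, coe_mul, mul_smul]
  group

theorem cosetCocycle_one (i : Q ⧸ H) : cosetCocycle H 1 i = 1 := by
  ext
  simp [cosetCocycle]

theorem cosetCocycle_coe_one [IsMulCommutative H] (h : H) :
    cosetCocycle H h ((1 : Q) : Q ⧸ H) = h := by
  set c : H := ⟨((1 : Q) : Q ⧸ H).out, by
    simpa using QuotientGroup.eq.mp (QuotientGroup.out_eq' ((1 : Q) : Q ⧸ H)).symm⟩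
  have hc : cosetCocycle H h ((1 : Q) : Q ⧸ H) = c⁻¹ * h * c := by
    ext
    simp [cosetCocycle, (smul_coe_one_eq_iff H h).mpr h.2, c]
  rw [hc, (Std.Commutative.comm c⁻¹ h : c⁻¹ * h = h * c⁻¹), inv_mul_cancel_right]

variable (A) in
abbrev InducedCoprod : Type _ := CoprodI fun _ : Q ⧸ H => A

variable (A) in
def inducedEnd (q : Q) : InducedCoprod H A →* InducedCoprod H A :=
  CoprodI.lift fun i => (CoprodI.of (i := q • i)).comp (χ (cosetCocycle H q i)).toMonoidHom

theorem inducedEnd_of (q : Q) (i : Q ⧸ H) (a : A) :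
    inducedEnd H A χ q (CoprodI.of (i := i) a) =
      CoprodI.of (i := q • i) (χ (cosetCocycle H q i) a) :=
  CoprodI.lift_of _ _

theorem inducedEnd_mul (q q' : Q) :
    inducedEnd H A χ (q * q') = (inducedEnd H A χ q).comp (inducedEnd H A χ q') := by
  refine CoprodI.ext_hom _ _ fun i => MonoidHom.ext fun a => ?_
  simp only [MonoidHom.comp_apply, inducedEnd_of, cosetCocycle_mul, map_mul, MulAut.mul_apply,
    mul_smul]

theorem inducedEnd_one : inducedEnd H A χ 1 = MonoidHom.id _ := by
  refine CoprodI.ext_hom _ _ fun i => MonoidHom.ext fun a => ?_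
  simp only [MonoidHom.comp_apply, inducedEnd_of, cosetCocycle_one, map_one, MulAut.one_apply,
    one_smul, MonoidHom.id_apply]

-- The free-product analogue of the representation induced from `χ`.
variable (A) in
def inducedAction : Q →* MulAut (InducedCoprod H A) where
  toFun q := (inducedEnd H A χ q).toMulEquiv (inducedEnd H A χ q⁻¹)
    (by rw [← inducedEnd_mul, inv_mul_cancel, inducedEnd_one])
    (by rw [← inducedEnd_mul, mul_inv_cancel, inducedEnd_one])
  map_one' := MulEquiv.ext fun w => by simp [inducedEnd_one]
  map_mul' q q' := MulEquiv.ext fun w => by simp [inducedEnd_mul]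

theorem inducedAction_of (q : Q) (i : Q ⧸ H) (a : A) :
    inducedAction H A χ q (CoprodI.of (i := i) a) =
      CoprodI.of (i := q • i) (χ (cosetCocycle H q i) a) :=
  inducedEnd_of H χ q i a

open SemidirectProduct

theorem inr_inv_mul_inl_of_mul_inr [IsMulCommutative H] (h : H) (a : A) :
    (inr (h : Q) : InducedCoprod H A ⋊[inducedAction H A χ] Q)⁻¹ *
        inl (CoprodI.of (i := ((1 : Q) : Q ⧸ H)) a) * inr (h : Q) =
      inl (CoprodI.of (i := ((1 : Q) : Q ⧸ H)) (χ h⁻¹ a)) := by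
  have hconj := inl_aut (φ := inducedAction H A χ) (h⁻¹ : H) (CoprodI.of (i := ((1 : Q) : Q ⧸ H)) a)
  rw [inducedAction_of, (smul_coe_one_eq_iff H _).mpr (h⁻¹).2, cosetCocycle_coe_one,
    coe_inv, inv_inv] at hconj
  rw [hconj, map_inv]

theorem infinite_closure_range_inr_union_inl_of {q : Q} (hq : q ∉ H) {a : A} (ha : a ≠ 1) :
    Infinite (closure (Set.range (inr : Q →* InducedCoprod H A ⋊[inducedAction H A χ] Q) ∪
      {inl (CoprodI.of (i := ((1 : Q) : Q ⧸ H)) a)})) := by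
  set S : Set (InducedCoprod H A ⋊[inducedAction H A χ] Q) :=
    Set.range inr ∪ {inl (CoprodI.of (i := ((1 : Q) : Q ⧸ H)) a)}
  set b := χ (cosetCocycle H q ((1 : Q) : Q ⧸ H)) a
  have hconj := inl_aut (φ := inducedAction H A χ) q (CoprodI.of (i := ((1 : Q) : Q ⧸ H)) a)
  rw [inducedAction_of] at hconj
  have hmem : inl (CoprodI.of (i := ((1 : Q) : Q ⧸ H)) a *
      CoprodI.of (i := q • ((1 : Q) : Q ⧸ H)) b) ∈ closure S := by
    have hβ : inl (CoprodI.of (i := ((1 : Q) : Q ⧸ H)) a) ∈ closure S := subset_closure (.inr rfl)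
    have hinr (q' : Q) : inr q' ∈ closure S := subset_closure (.inl ⟨q', rfl⟩)
    rw [map_mul, hconj]
    exact mul_mem hβ (mul_mem (mul_mem (hinr q) hβ) (hinr q⁻¹))
  refine infinite_of_mem_of_not_isOfFinOrder hmem ?_
  rw [inl_injective.isOfFinOrder_iff]
  refine CoprodI.not_isOfFinOrder_of_mul_of ?_ ha ((MulEquiv.map_ne_one_iff _).mpr ha)
  exact fun h => hq ((smul_coe_one_eq_iff H q).mp h.symm)

end InducedCoprod

theorem exists_mulAut_apply_eq_sq {n : ℕ} (hn : 2 ≤ n) :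
    ∃ (A : Type) (_ : Group A) (a : A) (α : MulAut A), a ≠ 1 ∧ α a = a ^ 2 ∧ α ^ n = 1 := by
  set m := 2 ^ n - 1
  have htwo : (2 : ZMod m) ^ n = 1 := by
    have hm : ((2 ^ n : ℕ) : ZMod m) = ((m + 1 : ℕ) : ZMod m) := by
      rw [Nat.sub_add_cancel Nat.one_le_two_pow]
    simpa using hm
  have : Fact (1 < m) := ⟨by
    have : 2 ^ 2 ≤ 2 ^ n := Nat.pow_le_pow_right (by norm_num) hn
    omega⟩
  let u : (ZMod m)ˣ := Units.ofPowEqOne 2 n htwo (by omega)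
  let Φ : (ZMod m)ˣ →* MulAut (Multiplicative (ZMod m)) :=
    (MulAutMultiplicative (ZMod m)).symm.toMonoidHom.comp (DistribMulAction.toAddAut _ _)
  refine ⟨Multiplicative (ZMod m), inferInstance, .ofAdd 1, Φ u, by simp, ?_, ?_⟩
  · change Multiplicative.ofAdd ((2 : ZMod m) * 1) = _
    rw [two_mul, ofAdd_add, sq]
  · rw [← map_pow, Units.pow_ofPowEqOne, map_one]

theorem exists_infinite_closure_of_isOfFinOrder {Q : Type u} [Group Q] (hQ : ¬IsCyclic Q)
    {ρ : Q} (hρ : IsOfFinOrder ρ) (hρ1 : ρ ≠ 1) :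
    ∃ (Γ : Type u) (_ : Group Γ) (g : Q →* Γ) (β : Γ),
      (g ρ)⁻¹ * β * g ρ = β ^ 2 ∧ Infinite (closure (Set.range g ∪ {β})) := by
  have hn : 2 ≤ orderOf ρ := by
    have := hρ.orderOf_pos
    have := mt orderOf_eq_one_iff.mp hρ1
    omega
  obtain ⟨A, _, a, α, ha, hαa, hαn⟩ := exists_mulAut_apply_eq_sq hn
  obtain ⟨q, hq⟩ : ∃ q, q ∉ zpowers ρ := by
    by_contra! h
    exact hQ ⟨ρ, h⟩
  let χ : zpowers ρ →* MulAut A := zpowersLift (y := α⁻¹) (by rw [inv_pow, hαn, inv_one])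
  have hχ : χ ⟨ρ, mem_zpowers ρ⟩⁻¹ = α := by rw [map_inv, zpowersLift_apply_self, inv_inv]
  refine ⟨_ ⋊[inducedAction _ A χ] Q, inferInstance, SemidirectProduct.inr,
    SemidirectProduct.inl (CoprodI.of (i := ((1 : Q) : Q ⧸ zpowers ρ)) a), ?_,
    infinite_closure_range_inr_union_inl_of _ χ hq ha⟩
  rw [inr_inv_mul_inl_of_mul_inr _ χ ⟨ρ, mem_zpowers ρ⟩, hχ, hαa, map_pow, map_pow]

theorem exists_infinite_closure_conj_eq_sq {Q : Type u} [Group Q] (hQ : ¬IsCyclic Q) {ρ : Q}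
    (hρ : ρ ≠ 1) :
    ∃ (Γ : Type u) (_ : Group Γ) (g : Q →* Γ) (β : Γ),
      (g ρ)⁻¹ * β * g ρ = β ^ 2 ∧ Infinite (closure (Set.range g ∪ {β})) := by
  rcases finite_or_infinite Q with hfin | hinf
  · exact exists_infinite_closure_of_isOfFinOrder hQ (isOfFinOrder_of_finite ρ) hρ
  · refine ⟨Q, inferInstance, MonoidHom.id Q, 1, by simp, ?_⟩
    have htop : closure (Set.range (MonoidHom.id Q) ∪ {1}) = ⊤ :=
      eq_top_iff.mpr fun x _ => subset_closure (.inl ⟨x, rfl⟩)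
    rw [htop]
    exact topEquiv.symm.toEquiv.infinite_iff.mp hinf

namespace PresentedGroup
variable {α : Type*}

theorem lift_of_eq_mk (rels : Set (FreeGroup α)) : FreeGroup.lift (of (rels := rels)) = mk rels :=
  FreeGroup.ext_hom _ _ fun _ => FreeGroup.lift_apply_of

theorem not_isCyclic_of_subset {s t : Set (FreeGroup α)} (hst : s ⊆ t)
    (ht : ¬IsCyclic (PresentedGroup t)) : ¬IsCyclic (PresentedGroup s) := fun _ =>
  ht <| isCyclic_of_surjective (PresentedGroup.map (.id _) hst) fun y => by
    induction y using induction_on with | H w => exact ⟨mk s w, rfl⟩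

def diffSingletonEquivOfMkEqOne {R : Set (FreeGroup α)} {r : FreeGroup α} (hr : r ∈ R)
    (h : mk (R \ {r}) r = 1) : PresentedGroup (R \ {r}) ≃* PresentedGroup R :=
  QuotientGroup.quotientMulEquivOfEq <|
    le_antisymm (Subgroup.normalClosure_mono Set.sdiff_subset) <|
    Subgroup.normalClosure_le_normal fun t ht => by
      obtain rfl | htr := eq_or_ne t r
      · exact mk_eq_one_iff.mp h
      · exact Subgroup.subset_normalClosure ⟨ht, htr⟩

end PresentedGroup

section DoubledRels
variable {X : Type*} {R : Set (FreeGroup X)}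

def fstDoubledRel (r : R) : FreeGroup (X ⊕ R) :=
  (iotaHom R r)⁻¹ * bGen r * iotaHom R r * (bGen r ^ 2)⁻¹

def sndDoubledRel (r : R) : FreeGroup (X ⊕ R) :=
  (bGen r)⁻¹ * iotaHom R r * bGen r * (iotaHom R r ^ 2)⁻¹

theorem mem_doubledRels {w : FreeGroup (X ⊕ R)} :
    w ∈ doubledRels R ↔ (∃ r, fstDoubledRel r = w) ∨ ∃ r, sndDoubledRel r = w :=
  Iff.rfl

theorem lift_comp_iotaHom {H : Type*} [Group H] (f : X ⊕ R → H) :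
    (FreeGroup.lift f).comp (iotaHom R) = FreeGroup.lift (f ∘ Sum.inl) :=
  FreeGroup.ext_hom _ _ fun _ => by simp [iotaHom]

theorem lift_fstDoubledRel {H : Type*} [Group H] (f : X ⊕ R → H) (r : R) :
    FreeGroup.lift f (fstDoubledRel r) = (FreeGroup.lift (f ∘ Sum.inl) r)⁻¹ * f (.inr r) *
      FreeGroup.lift (f ∘ Sum.inl) r * (f (.inr r) ^ 2)⁻¹ := by
  simp [fstDoubledRel, bGen, ← lift_comp_iotaHom f]

theorem lift_sndDoubledRel {H : Type*} [Group H] (f : X ⊕ R → H) (r : R) :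
    FreeGroup.lift f (sndDoubledRel r) = (f (.inr r))⁻¹ * FreeGroup.lift (f ∘ Sum.inl) r *
      f (.inr r) * (FreeGroup.lift (f ∘ Sum.inl) r ^ 2)⁻¹ := by
  simp [sndDoubledRel, bGen, ← lift_comp_iotaHom f]

open PresentedGroup

theorem mk_doubledRels_iotaHom_eq_one_and_mk_bGen_eq_one (r : R) :
    mk (doubledRels R) (iotaHom R r) = 1 ∧ mk (doubledRels R) (bGen r) = 1 := by
  have hfst := one_of_mem (rels := doubledRels R) (mem_doubledRels.mpr (.inl ⟨r, rfl⟩))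
  have hsnd := one_of_mem (rels := doubledRels R) (mem_doubledRels.mpr (.inr ⟨r, rfl⟩))
  simp only [fstDoubledRel, sndDoubledRel, map_mul, map_inv, map_pow, mul_inv_eq_one] at hfst hsnd
  exact eq_one_of_conj_eq_sq hfst hsnd

variable (R) in
def doubledRelsEquiv : PresentedGroup (doubledRels R) ≃* PresentedGroup R :=
  MonoidHom.toMulEquiv
    (toGroup (f := Sum.elim of 1) <| by
      intro w hw
      obtain ⟨r, rfl⟩ | ⟨r, rfl⟩ := mem_doubledRels.mp hw <;>
        simp [lift_fstDoubledRel, lift_sndDoubledRel, lift_of_eq_mk, one_of_mem r.2])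
    (toGroup (f := fun x => of (.inl x)) fun r hr => by
      rw [← (mk_doubledRels_iotaHom_eq_one_and_mk_bGen_eq_one ⟨r, hr⟩).1, ← lift_of_eq_mk,
        ← MonoidHom.comp_apply, lift_comp_iotaHom]
      rfl)
    (PresentedGroup.ext fun
      | .inl x => by simp [toGroup.of]
      | .inr r => by
        rw [MonoidHom.comp_apply, toGroup.of, Sum.elim_inr, Pi.one_apply, map_one]
        exact (mk_doubledRels_iotaHom_eq_one_and_mk_bGen_eq_one r).2.symm)
    (PresentedGroup.ext fun x => by simp [toGroup.of])

theorem infinite_presentedGroup_diff_fstDoubledRel (r : R) :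
    Infinite (PresentedGroup (doubledRels R \ {fstDoubledRel r})) := by
  classical
  let f : X ⊕ R → Multiplicative ℤ := Sum.elim 1 fun t => if t = r then .ofAdd 1 else 1
  have hf_inl : FreeGroup.lift (f ∘ Sum.inl) = 1 := FreeGroup.ext_hom _ _ fun _ => by simp [f]
  have hf : ∀ w ∈ doubledRels R \ {fstDoubledRel r}, FreeGroup.lift f w = 1 := by
    rintro w ⟨hw, hwr⟩
    obtain ⟨t, rfl⟩ | ⟨t, rfl⟩ := mem_doubledRels.mp hw
    · have htr : t ≠ r := by rintro rfl; exact hwr rfl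
      simp [lift_fstDoubledRel, f, htr]
    · simp [lift_sndDoubledRel, hf_inl]
  refine Infinite.of_surjective (toGroup hf) fun k => ⟨of (.inr r) ^ k.toAdd, ?_⟩
  simp [toGroup.of, f, ← ofAdd_zsmul]

theorem infinite_presentedGroup_diff_sndDoubledRel (r : R) {Γ : Type*} [Group Γ]
    (g : PresentedGroup (R \ {(r : FreeGroup X)}) →* Γ) (β : Γ)
    (hrel : (g (mk _ r))⁻¹ * β * g (mk _ r) = β ^ 2)
    (hinf : Infinite (Subgroup.closure (Set.range g ∪ {β}))) :
    Infinite (PresentedGroup (doubledRels R \ {sndDoubledRel r})) := by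
  classical
  let f : X ⊕ R → Γ := Sum.elim (fun x => g (of x)) fun t => if t = r then β else 1
  have hf_inl : FreeGroup.lift (f ∘ Sum.inl) = g.comp (mk _) :=
    FreeGroup.ext_hom _ _ fun _ => by simp [f, of]
  have hf : ∀ w ∈ doubledRels R \ {sndDoubledRel r}, FreeGroup.lift f w = 1 := by
    rintro w ⟨hw, hwr⟩
    obtain ⟨t, rfl⟩ | ⟨t, rfl⟩ := mem_doubledRels.mp hw
    · rw [lift_fstDoubledRel, hf_inl, mul_inv_eq_one]
      obtain rfl | htr := eq_or_ne t r
      · simpa [f] using hrel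
      · simp [f, htr]
    · have htr : t ≠ r := by rintro rfl; exact hwr rfl
      have ht_one : mk (R \ {(r : FreeGroup X)}) t = 1 :=
        one_of_mem ⟨t.2, fun h => htr (Subtype.ext h)⟩
      rw [lift_sndDoubledRel, hf_inl]
      simp [ht_one, f, htr]
  have hrange : Subgroup.closure (Set.range g ∪ {β}) ≤ (toGroup hf).range := by
    rw [Subgroup.closure_le]
    rintro _ (⟨y, rfl⟩ | rfl)
    · induction y using induction_on with
      | H w => exact ⟨mk _ (iotaHom R w), by
          rw [← MonoidHom.comp_apply g, ← hf_inl, ← lift_comp_iotaHom]; rfl⟩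
    · exact ⟨of (.inr r), by simp [toGroup.of, f]⟩
  have : Infinite (toGroup hf).range :=
    Infinite.of_injective _ (Subgroup.inclusion_injective hrange)
  exact Infinite.of_surjective _ (toGroup hf).rangeRestrict_surjective

end DoubledRels

theorem stmt_16_general (G : Type) [Group G] (hG : ¬IsCyclic G)
    (X : Type) (R : Set (FreeGroup X))
    (hpres : Nonempty (G ≃* PresentedGroup R))
    (hirr : ∀ r ∈ R, IsEmpty (PresentedGroup (R \ {r}) ≃* G)) :
    Nonempty (PresentedGroup (doubledRels R) ≃* G) ∧
    ∀ s ∈ doubledRels R, Infinite (PresentedGroup (doubledRels R \ {s})) := by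
  obtain ⟨e⟩ := hpres
  refine ⟨⟨(doubledRelsEquiv R).trans e.symm⟩, fun s hs => ?_⟩
  obtain ⟨r, rfl⟩ | ⟨r, rfl⟩ := mem_doubledRels.mp hs
  · exact infinite_presentedGroup_diff_fstDoubledRel r
  · have hQ : ¬IsCyclic (PresentedGroup (R \ {(r : FreeGroup X)})) :=
      PresentedGroup.not_isCyclic_of_subset Set.sdiff_subset fun _ =>
        hG (isCyclic_of_surjective e.symm e.symm.surjective)
    have hρ : PresentedGroup.mk (R \ {(r : FreeGroup X)}) r ≠ 1 := fun h =>
      (hirr r r.2).false ((PresentedGroup.diffSingletonEquivOfMkEqOne r.2 h).trans e.symm)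
    obtain ⟨Γ, _, g, β, hrel, hinf⟩ := exists_infinite_closure_conj_eq_sq hQ hρ
    exact infinite_presentedGroup_diff_sndDoubledRel r g β hrel hinf

/-- If `G` is a finite non-cyclic group with a finite irredundant presentation
`⟨X | R⟩`, then `⟨X ⊕ R | R'⟩`, with `R'` the doubled relator set, is a just finite
presentation of `G`: it presents `G`, and removing any relator gives an infinite
group. -/
theorem stmt_16 (G : Type) [Group G] [Finite G] (hG : ¬IsCyclic G)
    (X : Type) [Finite X] (R : Set (FreeGroup X)) (hR : R.Finite)
    (hpres : Nonempty (G ≃* PresentedGroup R))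
    (hirr : ∀ r ∈ R, IsEmpty (PresentedGroup (R \ {r}) ≃* G)) :
    Nonempty (PresentedGroup (doubledRels R) ≃* G) ∧
    ∀ s ∈ doubledRels R, Infinite (PresentedGroup (doubledRels R \ {s})) :=
  stmt_16_general G hG X R hpres hirr
end
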